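/- arXiv:1604.02578 — 2 statements merged into one kernel-verified Lean document; each statement's English description precedes it below -/
import Mathlib

section
/- Let (M_k)_{k≥1} be invertible real n×n matrices, (Ω_k)_{k≥0} real symmetric positive semi-definite n×n matrices, and P_0 a real symmetric positive semi-definite n×n matrix. Define P_{k+1} = M_{k+1}(I + P_kΩ_k)⁻¹P_kM_{k+1}ᵀ, M_{k:l} = M_k⋯M_{l+1}, and Γ_k = Σ_{l=0}^{k-1} M_{k:l}^{-ᵀ}Ω_lM_{k:l}^{-1}. If Γ_k is positive definite (the system is observable), then in the Loewner order P_k ≤ Γ_k⁻¹. Moreover, if L is positive definite and Γ_k ≥ L, then P_k ≤ L⁻¹. -/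
/-!
Let `Q_k = M_{k:0} P_0 M_{k:0}ᵀ` be the covariance propagated without any observations. By
induction along the recurrence, `(1 + Q_k Γ_k) P_k = Q_k`: one step of the recurrence conjugates
both sides by `M_{k+1}` and replaces `Γ_k` by `Γ_k + Ω_k`. When `Γ_k` is invertible this gives the
congruence `Γ_k⁻¹ - P_k = B⁻¹ (Γ_k⁻¹ + Q_k) B⁻ᵀ` with `B = 1 + Q_k Γ_k`, whence `P_k ≤ Γ_k⁻¹`.
The second bound follows because inversion is antitone on positive definite matrices, which is
read off the two Schur complements of the block matrix `[[Γ, 1], [1, L⁻¹]]`.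
-/

open Matrix

/-- `Mres M l j` is the resolvent `M_{(l+j):l} = M_{l+j} ⋯ M_{l+1}`, so that
`M_{k:l} = Mres M l (k - l)` for `k ≥ l`, and `M_{k:k} = 1`. -/
def Mres {n : ℕ} (M : ℕ → Matrix (Fin n) (Fin n) ℝ) (l : ℕ) :
    ℕ → Matrix (Fin n) (Fin n) ℝ
  | 0 => 1
  | j + 1 => M (l + j + 1) * Mres M l j

/-- The information matrix `Γ_k = Σ_{l=0}^{k-1} M_{k:l}⁻ᵀ * Ω_l * M_{k:l}⁻¹`. -/
noncomputable def Gamma {n : ℕ} (M Ω : ℕ → Matrix (Fin n) (Fin n) ℝ) (k : ℕ) :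
    Matrix (Fin n) (Fin n) ℝ :=
  ∑ l ∈ Finset.range k, ((Mres M l (k - l))⁻¹)ᵀ * Ω l * (Mres M l (k - l))⁻¹

namespace Matrix

section CommRing

variable {m R : Type*} [Fintype m] [DecidableEq m] [CommRing R]

theorem inv_one_add_mul_mul_eq {Q Γ Ω P : Matrix m m R} (hC : IsUnit (1 + Q * (Γ + Ω)))
    (hP : (1 + Q * Γ) * P = Q) : (1 + P * Ω)⁻¹ * P = (1 + Q * (Γ + Ω))⁻¹ * Q := by
  have hfactor : (1 + Q * Γ) * (1 + P * Ω) = 1 + Q * (Γ + Ω) := by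
    rw [mul_add (1 + Q * Γ), mul_one, ← mul_assoc, hP, mul_add Q, add_assoc]
  have hinv : (1 + P * Ω)⁻¹ = (1 + Q * (Γ + Ω))⁻¹ * (1 + Q * Γ) := by
    refine inv_eq_left_inv ?_
    rw [mul_assoc, hfactor, nonsing_inv_mul _ ((isUnit_iff_isUnit_det _).mp hC)]
  rw [hinv, mul_assoc, hP]

theorem one_add_conj_mul_conj {M : Matrix m m R} (hM : IsUnit M) (Q X Y : Matrix m m R) :
    (1 + M * Q * Mᵀ * ((M⁻¹)ᵀ * X * M⁻¹)) * (M * Y * Mᵀ) = M * ((1 + Q * X) * Y) * Mᵀ := by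
  have hMdet := (isUnit_iff_isUnit_det _).mp hM
  have htranspose : Mᵀ * (M⁻¹)ᵀ = 1 := by
    rw [← transpose_mul, nonsing_inv_mul _ hMdet, transpose_one]
  calc _ = M * Y * Mᵀ + M * Q * (Mᵀ * (M⁻¹)ᵀ) * X * (M⁻¹ * M) * Y * Mᵀ := by
          simp only [add_mul, one_mul, Matrix.mul_assoc]
    _ = M * ((1 + Q * X) * Y) * Mᵀ := by
          rw [htranspose, nonsing_inv_mul _ hMdet]
          simp only [add_mul, mul_add, one_mul, mul_one, Matrix.mul_assoc]

end CommRing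

section Real

variable {m : Type*}

theorem PosSemidef.transpose_eq {A : Matrix m m ℝ} (hA : A.PosSemidef) : Aᵀ = A := by
  simpa [conjTranspose_eq_transpose_of_trivial] using hA.isHermitian.eq

variable [Fintype m]

theorem PosSemidef.mul_mul_transpose_same {n : Type*} [Fintype n] {A : Matrix m m ℝ}
    (hA : A.PosSemidef) (B : Matrix n m ℝ) : (B * A * Bᵀ).PosSemidef := by
  simpa [conjTranspose_eq_transpose_of_trivial] using hA.mul_mul_conjTranspose_same B

theorem PosSemidef.transpose_mul_mul_same {n : Type*} [Fintype n] {A : Matrix m m ℝ}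
    (hA : A.PosSemidef) (B : Matrix m n ℝ) : (Bᵀ * A * B).PosSemidef := by
  simpa [conjTranspose_eq_transpose_of_trivial] using hA.conjTranspose_mul_mul_same B

variable [DecidableEq m]

open scoped MatrixOrder in
theorem PosSemidef.isUnit_one_add_mul {Q G : Matrix m m ℝ} (hQ : Q.PosSemidef)
    (hG : G.PosSemidef) : IsUnit (1 + Q * G) := by
  obtain ⟨S, rfl⟩ := CStarAlgebra.nonneg_iff_eq_star_mul_self.mp hQ.nonneg
  rw [isUnit_iff_isUnit_det, star_eq_conjTranspose, mul_assoc, det_one_add_mul_comm,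
    isUnit_iff_ne_zero]
  exact (PosDef.one.add_posSemidef (hG.mul_mul_conjTranspose_same S)).det_pos.ne'

theorem PosDef.inv_sub_inv_posSemidef {L G : Matrix m m ℝ} (hL : L.PosDef) (hG : G.PosDef)
    (hLG : (G - L).PosSemidef) : (L⁻¹ - G⁻¹).PosSemidef := by
  have := hG.isUnit.invertible
  have := hL.isUnit.invertible
  have := hL.inv.isUnit.invertible
  have hblock : (fromBlocks G 1 1ᴴ L⁻¹).PosSemidef := by
    rw [PosDef.fromBlocks₂₂ _ _ hL.inv]
    simpa using hLG
  simpa using (PosDef.fromBlocks₁₁ _ _ hG).mp hblock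

theorem inv_sub_posSemidef_of_one_add_mul_mul_eq {Q Γ P : Matrix m m ℝ} (hQ : Q.PosSemidef)
    (hΓ : Γ.PosDef) (hP : (1 + Q * Γ) * P = Q) : (Γ⁻¹ - P).PosSemidef := by
  set B := 1 + Q * Γ with hBdef
  have hBdet := (isUnit_iff_isUnit_det _).mp (hQ.isUnit_one_add_mul hΓ.posSemidef)
  have hΓdet := (isUnit_iff_isUnit_det _).mp hΓ.isUnit
  have hleft : B * (Γ⁻¹ - P) = Γ⁻¹ := by
    rw [mul_sub, hP, hBdef, add_mul, one_mul, mul_assoc, mul_nonsing_inv _ hΓdet, mul_one,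
      add_sub_cancel_right]
  have hright : Γ⁻¹ * Bᵀ = Γ⁻¹ + Q := by
    rw [hBdef, transpose_add, transpose_one, transpose_mul, hQ.transpose_eq,
      hΓ.posSemidef.transpose_eq, mul_add, mul_one, nonsing_inv_mul_cancel_left _ _ hΓdet]
  have hcongr : B⁻¹ * (Γ⁻¹ + Q) * (B⁻¹)ᵀ = Γ⁻¹ - P := by
    rw [← hright, transpose_nonsing_inv, ← mul_assoc,
      mul_nonsing_inv_cancel_right _ _ (by rwa [det_transpose])]
    conv_lhs => rw [← hleft]
    exact nonsing_inv_mul_cancel_left _ _ hBdet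
  rw [← hcongr]
  exact (hΓ.inv.posSemidef.add hQ).mul_mul_transpose_same _

end Real

end Matrix

section KalmanFilter

variable {n : ℕ} (M Ω : ℕ → Matrix (Fin n) (Fin n) ℝ)

theorem Mres_succ_sub_of_le {l k : ℕ} (h : l ≤ k) :
    Mres M l (k + 1 - l) = M (k + 1) * Mres M l (k - l) := by
  obtain ⟨j, rfl⟩ := Nat.exists_eq_add_of_le h
  rw [show l + j + 1 - l = j + 1 by omega, Nat.add_sub_cancel_left]
  rfl

theorem Gamma_succ (k : ℕ) :
    Gamma M Ω (k + 1) = ((M (k + 1))⁻¹)ᵀ * (Gamma M Ω k + Ω k) * (M (k + 1))⁻¹ := by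
  rw [Gamma, Finset.sum_range_succ, mul_add, add_mul, Gamma, Finset.mul_sum, Finset.sum_mul,
    Nat.add_sub_cancel_left]
  congr 1
  · refine Finset.sum_congr rfl fun l hl => ?_
    rw [Mres_succ_sub_of_le M (Finset.mem_range.mp hl).le, Matrix.mul_inv_rev, transpose_mul]
    simp only [Matrix.mul_assoc]
  · simp [Mres]

theorem Gamma_posSemidef (hΩ : ∀ k, (Ω k).PosSemidef) (k : ℕ) : (Gamma M Ω k).PosSemidef :=
  posSemidef_sum _ fun l _ => (hΩ l).transpose_mul_mul_same _

def propagatedCov (P₀ : Matrix (Fin n) (Fin n) ℝ) (k : ℕ) : Matrix (Fin n) (Fin n) ℝ :=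
  Mres M 0 k * P₀ * (Mres M 0 k)ᵀ

theorem propagatedCov_succ (P₀ : Matrix (Fin n) (Fin n) ℝ) (k : ℕ) :
    propagatedCov M P₀ (k + 1) = M (k + 1) * propagatedCov M P₀ k * (M (k + 1))ᵀ := by
  simp only [propagatedCov, Mres, zero_add, transpose_mul, Matrix.mul_assoc]

theorem propagatedCov_posSemidef {P₀ : Matrix (Fin n) (Fin n) ℝ} (hP₀ : P₀.PosSemidef)
    (k : ℕ) : (propagatedCov M P₀ k).PosSemidef :=
  hP₀.mul_mul_transpose_same _

theorem one_add_propagatedCov_mul_Gamma_mul_eq (hM : ∀ k, 1 ≤ k → IsUnit (M k))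
    (hΩ : ∀ k, (Ω k).PosSemidef) (P : ℕ → Matrix (Fin n) (Fin n) ℝ) (hP0 : (P 0).PosSemidef)
    (hrec : ∀ k, P (k + 1) = M (k + 1) * (1 + P k * Ω k)⁻¹ * P k * (M (k + 1))ᵀ) (k : ℕ) :
    (1 + propagatedCov M (P 0) k * Gamma M Ω k) * P k = propagatedCov M (P 0) k := by
  induction k with
  | zero => simp [propagatedCov, Mres, Gamma]
  | succ k ih =>
    set Q := propagatedCov M (P 0) k
    have hunit : IsUnit (1 + Q * (Gamma M Ω k + Ω k)) :=
      (propagatedCov_posSemidef M hP0 k).isUnit_one_add_mul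
        ((Gamma_posSemidef M Ω hΩ k).add (hΩ k))
    rw [propagatedCov_succ, Gamma_succ, hrec, Matrix.mul_assoc (M (k + 1)) _ (P k),
      inv_one_add_mul_mul_eq hunit ih, one_add_conj_mul_conj (hM (k + 1) k.succ_pos),
      mul_nonsing_inv_cancel_left _ _ ((isUnit_iff_isUnit_det _).mp hunit)]

end KalmanFilter

/-- Observability bounds the Kalman filter covariance: if `Γ_k` is positive
definite then `P_k ≤ Γ_k⁻¹` in the Loewner order; moreover, if `L` is positive
definite and `Γ_k ≥ L` then `P_k ≤ L⁻¹`. -/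
theorem kf_observability_bound {n : ℕ}
    (M Ω : ℕ → Matrix (Fin n) (Fin n) ℝ)
    (hM : ∀ k, 1 ≤ k → IsUnit (M k)) (hΩ : ∀ k, (Ω k).PosSemidef)
    (P : ℕ → Matrix (Fin n) (Fin n) ℝ) (hP0 : (P 0).PosSemidef)
    (hrec : ∀ k, P (k + 1)
      = M (k + 1) * (1 + P k * Ω k)⁻¹ * P k * (M (k + 1))ᵀ)
    (k : ℕ) (hΓ : (Gamma M Ω k).PosDef) :
    ((Gamma M Ω k)⁻¹ - P k).PosSemidef ∧
    ∀ L : Matrix (Fin n) (Fin n) ℝ, L.PosDef →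
      (Gamma M Ω k - L).PosSemidef → (L⁻¹ - P k).PosSemidef := by
  have hbound : ((Gamma M Ω k)⁻¹ - P k).PosSemidef :=
    inv_sub_posSemidef_of_one_add_mul_mul_eq (propagatedCov_posSemidef M hP0 k) hΓ
      (one_add_propagatedCov_mul_Gamma_mul_eq M Ω hM hΩ P hP0 hrec k)
  refine ⟨hbound, fun L hL hΓL => ?_⟩
  simpa using (hL.inv_sub_inv_posSemidef hΓ hΓL).add hbound
end

section
/- Let (M_k)_{k≥1} be invertible real n×n matrices, (Ω_k)_{k≥0} real symmetric positive semi-definite n×n matrices, and P_0 a real symmetric positive semi-definite n×n matrix. Define P_{k+1} = M_{k+1}(I + P_kΩ_k)⁻¹P_kM_{k+1}ᵀ and M_{k:0} = M_k⋯M_1. For a real symmetric n×n matrix A, write σ_i(A) for its i-th largest eigenvalue (σ₁ ≥ σ₂ ≥ ⋯ ≥ σ_n). Then for every k ≥ 0 and every 1 ≤ i ≤ n, σ_i(P_k) ≤ σ₁(P_0)·σ_i(M_{k:0}M_{k:0}ᵀ). -/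
/-!
With `R = √P`, the analysis step is `(1 + PΩ)⁻¹P = R(1 + RΩR)⁻¹R`, and `0 ≤ (1 + RΩR)⁻¹ ≤ 1`,
so `0 ≤ (1 + PΩ)⁻¹P ≤ P` in the Loewner order. Conjugating by the propagators gives inductively
`P_k ≤ M_{k:0} P_0 M_{k:0}ᵀ ≤ σ₁(P_0) M_{k:0} M_{k:0}ᵀ`. Finally `A ≤ c B` with `c ≥ 0` forces
`σ_i(A) ≤ c σ_i(B)` (Courant–Fischer): by counting dimensions some `x ≠ 0` lies both in the
span of the eigenvectors of `A` with eigenvalue `≥ σ_i(A)` and in that of the eigenvectors of `B`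
with eigenvalue `≤ σ_i(B)`, whence `σ_i(A) |x|² ≤ xᵀAx ≤ c xᵀBx ≤ c σ_i(B) |x|²`.
-/

open Matrix

/-- `eigDesc A i` is the `i`-th largest eigenvalue of a real symmetric matrix `A`
(with `i : Fin n` zero-based, so `eigDesc A 0` is the largest eigenvalue);
it is defined as `0` if `A` is not Hermitian. -/
noncomputable def eigDesc {n : ℕ} (A : Matrix (Fin n) (Fin n) ℝ) (i : Fin n) : ℝ :=
  if hA : A.IsHermitian then (hA.eigenvalues ∘ Tuple.sort hA.eigenvalues) i.rev else 0

open scoped MatrixOrder ComplexOrder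

namespace Tuple

variable {α : Type*} [LinearOrder α] {n : ℕ}

theorem val_add_one_le_card_filter_comp_sort_rev_le (f : Fin n → α) (i : Fin n) :
    i.val + 1 ≤ (Finset.univ.filter fun j => (f ∘ sort f) i.rev ≤ f j).card := by
  calc i.val + 1 = (Finset.Ici i.rev).card := by
        simp only [Fin.card_Ici, Fin.val_rev]; omega
    _ ≤ _ := Finset.card_le_card_of_injOn (sort f)
          (fun j hj => by simpa using monotone_sort f (Finset.mem_Ici.mp hj))
          (sort f).injective.injOn

theorem sub_val_le_card_filter_le_comp_sort_rev (f : Fin n → α) (i : Fin n) :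
    n - i.val ≤ (Finset.univ.filter fun j => f j ≤ (f ∘ sort f) i.rev).card := by
  calc n - i.val = (Finset.Iic i.rev).card := by
        simp only [Fin.card_Iic, Fin.val_rev]; omega
    _ ≤ _ := Finset.card_le_card_of_injOn (sort f)
          (fun j hj => by simpa using monotone_sort f (Finset.mem_Iic.mp hj))
          (sort f).injective.injOn

theorem le_comp_sort_rev_zero (f : Fin n → α) (hn : 0 < n) (j : Fin n) :
    f j ≤ (f ∘ sort f) (⟨0, hn⟩ : Fin n).rev := by
  have hlast : (sort f).symm j ≤ (⟨0, hn⟩ : Fin n).rev := by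
    have := ((sort f).symm j).isLt
    rw [Fin.le_def, Fin.val_rev]; simp only; omega
  simpa using monotone_sort f hlast

end Tuple

theorem Matrix.exists_ne_zero_forall_mulVec_apply_eq_zero {K ι : Type*} [Field K]
    [Fintype ι]
    (U V : Matrix ι ι K) (S T : Finset ι) (hST : Fintype.card ι < S.card + T.card) :
    ∃ x ≠ 0, (∀ j ∉ S, (U *ᵥ x) j = 0) ∧ ∀ j ∉ T, (V *ᵥ x) j = 0 := by
  classical
  let f : (ι → K) →ₗ[K] ({j // j ∉ S} → K) × ({j // j ∉ T} → K) :=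
    .prod (.funLeft K K Subtype.val ∘ₗ U.mulVecLin) (.funLeft K K Subtype.val ∘ₗ V.mulVecLin)
  have hdim : Module.finrank K (({j // j ∉ S} → K) × ({j // j ∉ T} → K))
      < Module.finrank K (ι → K) := by
    simp only [Module.finrank_prod, Module.finrank_fintype_fun_eq_card,
      Fintype.card_subtype_compl, Fintype.card_coe]
    have := S.card_le_univ
    have := T.card_le_univ
    omega
  obtain ⟨x, hx, hx0⟩ :=
    Submodule.exists_mem_ne_zero_of_ne_bot (LinearMap.ker_ne_bot_of_finrank_lt (f := f) hdim)
  refine ⟨x, hx0, fun j hj => ?_, fun j hj => ?_⟩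
  · exact congrFun (congrArg Prod.fst (LinearMap.mem_ker.mp hx)) ⟨j, hj⟩
  · exact congrFun (congrArg Prod.snd (LinearMap.mem_ker.mp hx)) ⟨j, hj⟩

theorem Matrix.dotProduct_mulVec_mul_diagonal_mul_star {ι : Type*} [Fintype ι] [DecidableEq ι]
    (U : Matrix ι ι ℝ) (d : ι → ℝ) (x : ι → ℝ) :
    x ⬝ᵥ (U * diagonal d * star U) *ᵥ x = ∑ j, d j * (star U *ᵥ x) j ^ 2 := by
  rw [← mulVec_mulVec, ← mulVec_mulVec, dotProduct_mulVec, star_eq_conjTranspose,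
    conjTranspose_eq_transpose_of_trivial, ← mulVec_transpose]
  simp only [dotProduct, mulVec_diagonal]
  exact Finset.sum_congr rfl fun j _ => by ring

theorem Matrix.dotProduct_self_eq_sum_sq_star_mulVec {ι : Type*} [Fintype ι] [DecidableEq ι]
    (U : unitaryGroup ι ℝ) (x : ι → ℝ) :
    x ⬝ᵥ x = ∑ j, (star (U : Matrix ι ι ℝ) *ᵥ x) j ^ 2 := by
  simpa using dotProduct_mulVec_mul_diagonal_mul_star (U : Matrix ι ι ℝ) 1 x

namespace Matrix.IsHermitian

variable {ι : Type*} [Fintype ι] [DecidableEq ι] {A : Matrix ι ι ℝ} (hA : A.IsHermitian)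
include hA

theorem dotProduct_mulVec_eq_sum_eigenvalues_mul_sq (x : ι → ℝ) :
    x ⬝ᵥ A *ᵥ x
      = ∑ j, hA.eigenvalues j * (star (hA.eigenvectorUnitary : Matrix ι ι ℝ) *ᵥ x) j ^ 2 := by
  conv_lhs => rw [hA.spectral_theorem]
  simpa [Unitary.conjStarAlgAut_apply] using
    dotProduct_mulVec_mul_diagonal_mul_star _ hA.eigenvalues x

theorem mul_dotProduct_self_le_dotProduct_mulVec {S : Finset ι} {t : ℝ}
    (hS : ∀ j ∈ S, t ≤ hA.eigenvalues j) {x : ι → ℝ}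
    (hx : ∀ j ∉ S, (star (hA.eigenvectorUnitary : Matrix ι ι ℝ) *ᵥ x) j = 0) :
    t * (x ⬝ᵥ x) ≤ x ⬝ᵥ A *ᵥ x := by
  rw [dotProduct_self_eq_sum_sq_star_mulVec hA.eigenvectorUnitary,
    hA.dotProduct_mulVec_eq_sum_eigenvalues_mul_sq, Finset.mul_sum]
  refine Finset.sum_le_sum fun j _ => ?_
  by_cases hj : j ∈ S
  · exact mul_le_mul_of_nonneg_right (hS j hj) (sq_nonneg _)
  · simp [hx j hj]

theorem dotProduct_mulVec_le_mul_dotProduct_self {S : Finset ι} {s : ℝ}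
    (hS : ∀ j ∈ S, hA.eigenvalues j ≤ s) {x : ι → ℝ}
    (hx : ∀ j ∉ S, (star (hA.eigenvectorUnitary : Matrix ι ι ℝ) *ᵥ x) j = 0) :
    x ⬝ᵥ A *ᵥ x ≤ s * (x ⬝ᵥ x) := by
  rw [dotProduct_self_eq_sum_sq_star_mulVec hA.eigenvectorUnitary,
    hA.dotProduct_mulVec_eq_sum_eigenvalues_mul_sq, Finset.mul_sum]
  refine Finset.sum_le_sum fun j _ => ?_
  by_cases hj : j ∈ S
  · exact mul_le_mul_of_nonneg_right (hS j hj) (sq_nonneg _)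
  · simp [hx j hj]

end Matrix.IsHermitian

theorem Matrix.dotProduct_mulVec_le_of_le {ι : Type*} [Fintype ι] {A B : Matrix ι ι ℝ}
    (h : A ≤ B) (x : ι → ℝ) : x ⬝ᵥ A *ᵥ x ≤ x ⬝ᵥ B *ᵥ x := by
  have := (le_iff.mp h).dotProduct_mulVec_nonneg x
  rw [star_trivial, sub_mulVec, dotProduct_sub] at this
  linarith

section eigDesc

variable {n : ℕ} {A B : Matrix (Fin n) (Fin n) ℝ}

theorem eigDesc_of_isHermitian (hA : A.IsHermitian) (i : Fin n) :
    eigDesc A i = (hA.eigenvalues ∘ Tuple.sort hA.eigenvalues) i.rev :=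
  dif_pos hA

theorem eigDesc_le_mul_eigDesc_of_le_smul (hA : A.IsHermitian) (hB : B.IsHermitian) {c : ℝ}
    (hc : 0 ≤ c) (h : A ≤ c • B) (i : Fin n) : eigDesc A i ≤ c * eigDesc B i := by
  classical
  rw [eigDesc_of_isHermitian hA, eigDesc_of_isHermitian hB]
  have hSA := Tuple.val_add_one_le_card_filter_comp_sort_rev_le hA.eigenvalues i
  have hSB := Tuple.sub_val_le_card_filter_le_comp_sort_rev hB.eigenvalues i
  set t := (hA.eigenvalues ∘ Tuple.sort hA.eigenvalues) i.rev
  set s := (hB.eigenvalues ∘ Tuple.sort hB.eigenvalues) i.rev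
  obtain ⟨x, hx0, hxA, hxB⟩ := exists_ne_zero_forall_mulVec_apply_eq_zero
    (star (hA.eigenvectorUnitary : Matrix (Fin n) (Fin n) ℝ))
    (star (hB.eigenvectorUnitary : Matrix (Fin n) (Fin n) ℝ))
    (Finset.univ.filter fun j => t ≤ hA.eigenvalues j)
    (Finset.univ.filter fun j => hB.eigenvalues j ≤ s)
    (by rw [Fintype.card_fin]; omega)
  have hxx : 0 < x ⬝ᵥ x := by simpa using dotProduct_star_self_pos_iff.mpr hx0
  refine le_of_mul_le_mul_right ?_ hxx
  calc t * (x ⬝ᵥ x) ≤ x ⬝ᵥ A *ᵥ x :=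
        hA.mul_dotProduct_self_le_dotProduct_mulVec (fun j hj => (Finset.mem_filter.mp hj).2) hxA
    _ ≤ x ⬝ᵥ (c • B) *ᵥ x := dotProduct_mulVec_le_of_le h x
    _ = c * (x ⬝ᵥ B *ᵥ x) := by rw [smul_mulVec, dotProduct_smul, smul_eq_mul]
    _ ≤ c * (s * (x ⬝ᵥ x)) := mul_le_mul_of_nonneg_left
        (hB.dotProduct_mulVec_le_mul_dotProduct_self (fun j hj => (Finset.mem_filter.mp hj).2) hxB)
        hc
    _ = c * s * (x ⬝ᵥ x) := by ring

theorem le_eigDesc_zero_smul_one (hA : A.IsHermitian) (hn : 0 < n) :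
    A ≤ eigDesc A ⟨0, hn⟩ • 1 := by
  refine le_iff.mpr (.of_dotProduct_mulVec_nonneg ?_ fun x => ?_)
  · exact (isHermitian_one.smul (IsSelfAdjoint.all _)).sub hA
  · have := hA.dotProduct_mulVec_le_mul_dotProduct_self (S := Finset.univ) (x := x)
      (s := eigDesc A ⟨0, hn⟩)
      (fun j _ => by rw [eigDesc_of_isHermitian hA]; exact Tuple.le_comp_sort_rev_zero _ hn j)
      (by simp)
    rw [star_trivial, sub_mulVec, dotProduct_sub, smul_mulVec, one_mulVec, dotProduct_smul,
      smul_eq_mul]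
    linarith

end eigDesc

namespace Matrix.PosSemidef

variable {𝕜 ι : Type*} [RCLike 𝕜] [Fintype ι] [DecidableEq ι] {P Q : Matrix ι ι 𝕜}

theorem posDef_one_add_conjugate (hQ : Q.PosSemidef) {R : Matrix ι ι 𝕜}
    (hR : IsSelfAdjoint R) :
    (1 + R * Q * R).PosDef :=
  PosDef.one.add_posSemidef (hR.conjugate_nonneg hQ.nonneg).posSemidef

theorem inv_one_add_mul_mul_eq_sqrt_conjugate (hP : P.PosSemidef) (hQ : Q.PosSemidef) :
    (1 + P * Q)⁻¹ * P = CFC.sqrt P * (1 + CFC.sqrt P * Q * CFC.sqrt P)⁻¹ * CFC.sqrt P := by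
  set R := CFC.sqrt P
  have hRR : R * R = P := CFC.sqrt_mul_sqrt_self P hP.nonneg
  have hDdet : IsUnit (1 + R * Q * R).det :=
    (posDef_one_add_conjugate hQ (.of_nonneg (CFC.sqrt_nonneg P))).isUnit.map detMonoidHom
  have hPQdet : IsUnit (1 + P * Q).det := by
    rwa [← hRR, Matrix.mul_assoc, Matrix.det_one_add_mul_comm]
  have hPQR : (1 + P * Q) * R = R * (1 + R * Q * R) := by rw [← hRR]; noncomm_ring
  have hK : (1 + P * Q) * (R * (1 + R * Q * R)⁻¹ * R) = P := by
    rw [← Matrix.mul_assoc, ← Matrix.mul_assoc, hPQR, Matrix.mul_assoc R,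
      mul_nonsing_inv _ hDdet, Matrix.mul_one, hRR]
  calc (1 + P * Q)⁻¹ * P
        = (1 + P * Q)⁻¹ * ((1 + P * Q) * (R * (1 + R * Q * R)⁻¹ * R)) := by rw [hK]
    _ = _ := nonsing_inv_mul_cancel_left _ _ hPQdet

theorem inv_one_add_mul_mul_nonneg (hP : P.PosSemidef) (hQ : Q.PosSemidef) :
    0 ≤ (1 + P * Q)⁻¹ * P := by
  rw [inv_one_add_mul_mul_eq_sqrt_conjugate hP hQ]
  exact IsSelfAdjoint.of_nonneg (CFC.sqrt_nonneg P) |>.conjugate_nonneg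
    (posDef_one_add_conjugate hQ (.of_nonneg (CFC.sqrt_nonneg P))).inv.posSemidef.nonneg

theorem inv_one_add_le_one {C : Matrix ι ι 𝕜} (hC : C.PosSemidef) : (1 + C)⁻¹ ≤ 1 := by
  have hD : (1 + C).PosDef := PosDef.one.add_posSemidef hC
  have hDinv : IsSelfAdjoint (1 + C)⁻¹ := hD.inv.isHermitian
  have hdet : IsUnit (1 + C).det := hD.isUnit.map detMonoidHom
  have : 1 - (1 + C)⁻¹ = (1 + C)⁻¹ * (C + C * C) * (1 + C)⁻¹ := by
    calc 1 - (1 + C)⁻¹ = (1 + C) * (1 + C)⁻¹ - (1 + C)⁻¹ := by rw [mul_nonsing_inv _ hdet]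
      _ = (1 + C)⁻¹ * ((1 + C) * C) * (1 + C)⁻¹ := by
        rw [nonsing_inv_mul_cancel_left _ _ hdet]; noncomm_ring
      _ = _ := by noncomm_ring
  rw [← sub_nonneg, this]
  exact hDinv.conjugate_nonneg
    (add_nonneg hC.nonneg (IsSelfAdjoint.of_nonneg hC.nonneg).mul_self_nonneg)

theorem inv_one_add_mul_mul_le_self (hP : P.PosSemidef) (hQ : Q.PosSemidef) :
    (1 + P * Q)⁻¹ * P ≤ P := by
  have hR : IsSelfAdjoint (CFC.sqrt P) := .of_nonneg (CFC.sqrt_nonneg P)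
  calc (1 + P * Q)⁻¹ * P = CFC.sqrt P * (1 + CFC.sqrt P * Q * CFC.sqrt P)⁻¹ * CFC.sqrt P :=
        inv_one_add_mul_mul_eq_sqrt_conjugate hP hQ
    _ ≤ CFC.sqrt P * 1 * CFC.sqrt P :=
        hR.conjugate_le_conjugate (inv_one_add_le_one (hR.conjugate_nonneg hQ.nonneg).posSemidef)
    _ = P := by rw [Matrix.mul_one, CFC.sqrt_mul_sqrt_self P hP.nonneg]

end Matrix.PosSemidef

theorem Mres_zero_succ {n : ℕ} (M : ℕ → Matrix (Fin n) (Fin n) ℝ) (k : ℕ) :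
    Mres M 0 (k + 1) = M (k + 1) * Mres M 0 k := by
  rw [Mres, Nat.zero_add]

theorem nonneg_and_le_Mres_mul_mul_transpose {n : ℕ} (M Ω P : ℕ → Matrix (Fin n) (Fin n) ℝ)
    (hΩ : ∀ k, (Ω k).PosSemidef) (hP0 : (P 0).PosSemidef)
    (hrec : ∀ k, P (k + 1) = M (k + 1) * (1 + P k * Ω k)⁻¹ * P k * (M (k + 1))ᵀ) (k : ℕ) :
    0 ≤ P k ∧ P k ≤ Mres M 0 k * P 0 * (Mres M 0 k)ᵀ := by
  induction k with
  | zero => simpa [Mres] using hP0.nonneg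
  | succ k ih =>
    obtain ⟨hPk, hle⟩ := ih
    have hstar : star (M (k + 1)) = (M (k + 1))ᵀ := conjTranspose_eq_transpose_of_trivial _
    have hK := hPk.posSemidef.inv_one_add_mul_mul_nonneg (hΩ k)
    have hKle := hPk.posSemidef.inv_one_add_mul_mul_le_self (hΩ k)
    rw [hrec, Mres_zero_succ, transpose_mul, Matrix.mul_assoc (M (k + 1)), ← hstar]
    refine ⟨star_right_conjugate_nonneg hK _, ?_⟩
    calc M (k + 1) * ((1 + P k * Ω k)⁻¹ * P k) * star (M (k + 1))
        ≤ M (k + 1) * P k * star (M (k + 1)) := star_right_conjugate_le_conjugate hKle _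
      _ ≤ M (k + 1) * (Mres M 0 k * P 0 * (Mres M 0 k)ᵀ) * star (M (k + 1)) :=
          star_right_conjugate_le_conjugate hle _
      _ = _ := by simp only [Matrix.mul_assoc]

theorem kf_eigenvalue_decay_general {n : ℕ}
    (M Ω : ℕ → Matrix (Fin n) (Fin n) ℝ)
    (hΩ : ∀ k, (Ω k).PosSemidef)
    (P : ℕ → Matrix (Fin n) (Fin n) ℝ) (hP0 : (P 0).PosSemidef)
    (hrec : ∀ k, P (k + 1)
      = M (k + 1) * (1 + P k * Ω k)⁻¹ * P k * (M (k + 1))ᵀ) :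
    ∀ k, ∀ i : Fin n,
      eigDesc (P k) i
        ≤ eigDesc (P 0) ⟨0, i.pos⟩ * eigDesc (Mres M 0 k * (Mres M 0 k)ᵀ) i := by
  intro k i
  obtain ⟨hPk, hle⟩ := nonneg_and_le_Mres_mul_mul_transpose M Ω P hΩ hP0 hrec k
  have hc : 0 ≤ eigDesc (P 0) ⟨0, i.pos⟩ := by
    rw [eigDesc_of_isHermitian hP0.isHermitian]; exact hP0.eigenvalues_nonneg _
  set W := Mres M 0 k
  set c := eigDesc (P 0) ⟨0, i.pos⟩
  have hstar : star W = Wᵀ := conjTranspose_eq_transpose_of_trivial W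
  have hWW : (W * Wᵀ).IsHermitian := by
    simpa only [conjTranspose_eq_transpose_of_trivial] using isHermitian_mul_conjTranspose_self W
  refine eigDesc_le_mul_eigDesc_of_le_smul hPk.posSemidef.isHermitian hWW hc ?_ i
  calc P k ≤ W * P 0 * star W := hstar ▸ hle
    _ ≤ W * (c • 1) * star W :=
        star_right_conjugate_le_conjugate (le_eigDesc_zero_smul_one hP0.isHermitian i.pos) W
    _ = c • (W * Wᵀ) := by rw [hstar, Matrix.mul_smul, Matrix.mul_one, Matrix.smul_mul]

/-- Rate of convergence of the eigenvalues of the perfect-model Kalman filter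
covariance: for every `k` and every `i`, the `i`-th largest eigenvalue of `P_k`
is bounded by `σ₁(P_0) * σ_i(M_{k:0} M_{k:0}ᵀ)`. -/
theorem kf_eigenvalue_decay {n : ℕ}
    (M Ω : ℕ → Matrix (Fin n) (Fin n) ℝ)
    (hM : ∀ k, 1 ≤ k → IsUnit (M k)) (hΩ : ∀ k, (Ω k).PosSemidef)
    (P : ℕ → Matrix (Fin n) (Fin n) ℝ) (hP0 : (P 0).PosSemidef)
    (hrec : ∀ k, P (k + 1)
      = M (k + 1) * (1 + P k * Ω k)⁻¹ * P k * (M (k + 1))ᵀ) :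
    ∀ k, ∀ i : Fin n,
      eigDesc (P k) i
        ≤ eigDesc (P 0) ⟨0, i.pos⟩ * eigDesc (Mres M 0 k * (Mres M 0 k)ᵀ) i :=
  kf_eigenvalue_decay_general M Ω hΩ P hP0 hrec
end
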